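/- Let A be a symmetric positive semidefinite n×n real matrix and C an m×n real matrix. The saddle-point block matrix [[A, Cᵀ],[C, 0]] is nonsingular if and only if null(A) ∩ null(C) = {0} and C has full row rank. -/
import Mathlib

open Matrix

lemma rank_eq_iff_ker {n m : ℕ} (C : Matrix (Fin m) (Fin n) ℝ) :
    C.rank = m ↔ (∀ y : Fin m → ℝ, Cᵀ.mulVec y = 0 → y = 0) := by
  rw [← Matrix.rank_transpose]
  have hdef : Cᵀ.rank = Module.finrank ℝ (LinearMap.range Cᵀ.mulVecLin) := rfl
  have hsum := LinearMap.finrank_range_add_finrank_ker Cᵀ.mulVecLin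
  have hcard : Module.finrank ℝ (Fin m → ℝ) = m := by simp
  rw [hcard] at hsum
  constructor
  · intro h y hy
    have hker : Module.finrank ℝ (LinearMap.ker Cᵀ.mulVecLin) = 0 := by omega
    have := Submodule.finrank_eq_zero.mp hker
    have hy' : y ∈ LinearMap.ker Cᵀ.mulVecLin := hy
    rw [this] at hy'
    simpa using hy'
  · intro h
    have hker : LinearMap.ker Cᵀ.mulVecLin = ⊥ := by
      ext y
      simp only [LinearMap.mem_ker, Submodule.mem_bot]
      exact ⟨fun hy => h y hy, fun hy => by rw [hy]; exact map_zero _⟩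
    rw [hker] at hsum
    rw [hdef]
    simpa using hsum

/-- For `A` symmetric positive semidefinite and `C` an `m × n` matrix, the saddle-point
matrix `[[A, Cᵀ], [C, 0]]` is nonsingular iff `null A ∩ null C = {0}` and `C` has full
row rank. -/
theorem saddle_point_nonsingular_iff {n m : ℕ}
    (A : Matrix (Fin n) (Fin n) ℝ) (C : Matrix (Fin m) (Fin n) ℝ)
    (hA : A.PosSemidef) :
    IsUnit (Matrix.fromBlocks A Cᵀ C (0 : Matrix (Fin m) (Fin m) ℝ)) ↔
      ((∀ x : Fin n → ℝ, A.mulVec x = 0 → C.mulVec x = 0 → x = 0) ∧ C.rank = m) := by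
  set M := Matrix.fromBlocks A Cᵀ C (0 : Matrix (Fin m) (Fin m) ℝ) with hM
  have hunit : IsUnit M ↔ (∀ v : Fin n ⊕ Fin m → ℝ, M.mulVec v = 0 → v = 0) := by
    rw [← Matrix.mulVec_injective_iff_isUnit]
    constructor
    · intro h v hv
      have := h (a₁ := v) (a₂ := 0) (by simpa using hv)
      exact this
    · intro h a b hab
      have : M.mulVec (a - b) = 0 := by
        rw [Matrix.mulVec_sub, hab, sub_self]
      have := h _ this
      exact sub_eq_zero.mp this
  rw [hunit]
  constructor
  · intro h
    refine ⟨fun x hAx hCx => ?_, ?_⟩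
    · have hv : M.mulVec (Sum.elim x 0) = 0 := by
        rw [hM, Matrix.fromBlocks_mulVec]
        simp [hAx, hCx]
      have := h _ hv
      funext i
      exact congrFun this (Sum.inl i)
    · rw [rank_eq_iff_ker]
      intro y hy
      have hv : M.mulVec (Sum.elim 0 y) = 0 := by
        rw [hM, Matrix.fromBlocks_mulVec]
        simp [hy]
      have := h _ hv
      funext i
      exact congrFun this (Sum.inr i)
  · rintro ⟨h1, h2⟩ v hv
    rw [rank_eq_iff_ker] at h2
    set x : Fin n → ℝ := v ∘ Sum.inl
    set y : Fin m → ℝ := v ∘ Sum.inr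
    have hvelim : v = Sum.elim x y := by
      funext i; cases i <;> rfl
    rw [hvelim, hM, Matrix.fromBlocks_mulVec] at hv
    have h1' : A.mulVec x + Cᵀ.mulVec y = 0 := by
      funext i; simpa using congrFun hv (Sum.inl i)
    have h2' : C.mulVec x = 0 := by
      funext i; simpa using congrFun hv (Sum.inr i)
    -- x ⬝ᵥ A x = 0
    have hdot : x ⬝ᵥ A.mulVec x = 0 := by
      have := congrArg (fun w => x ⬝ᵥ w) h1'
      simp only [dotProduct_add, dotProduct_zero] at this
      have hcross : x ⬝ᵥ Cᵀ.mulVec y = 0 := by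
        rw [Matrix.dotProduct_mulVec, Matrix.vecMul_transpose, h2']
        simp
      linarith [this, hcross]
    have hAx : A.mulVec x = 0 := by
      have := (hA.dotProduct_mulVec_zero_iff x).mp (by simpa using hdot)
      exact this
    have hx : x = 0 := h1 x hAx h2'
    have hCty : Cᵀ.mulVec y = 0 := by
      rw [hx, Matrix.mulVec_zero, zero_add] at h1'
      exact h1'
    have hy : y = 0 := h2 y hCty
    rw [hvelim, hx, hy]
    funext i; cases i <;> rfl
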